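/- Let M be an f-matching and suppose every augmenting trail for M has length at least s. If M* is any f-matching, then the number of edge-disjoint augmenting trails needed to transform M into a maximum f-matching obtained from M* satisfies: the number of such trails is at most f(V)/(s−1), where f(V) = Σ_v f(v). In particular, if s ≥ √(f(V)) + 1, then |M*| − |M| ≤ 2√(f(V)). -/

import Mathlib

structure Multigraph (V E : Type) where
  fst : E → V
  snd : E → V

structure MWalk (V E : Type) where
  len : ℕ
  vs : ℕ → V
  es : ℕ → E

variable {V E : Type}

def Multigraph.links (G : Multigraph V E) (e : E) (u v : V) : Prop :=
  (G.fst e = u ∧ G.snd e = v) ∨ (G.fst e = v ∧ G.snd e = u)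

def MWalk.IsWalk (G : Multigraph V E) (W : MWalk V E) : Prop :=
  ∀ i < W.len, G.links (W.es i) (W.vs i) (W.vs (i+1))

/-- A trail is a walk with no repeated edges. -/
def MWalk.IsTrail (G : Multigraph V E) (W : MWalk V E) : Prop :=
  W.IsWalk G ∧ ∀ i < W.len, ∀ j < W.len, W.es i = W.es j → i = j

/-- Degree of `v` in the edge set `M` (loops counted twice). -/
def Multigraph.deg [DecidableEq V] [DecidableEq E] (G : Multigraph V E)
    (M : Finset E) (v : V) : ℕ :=
  (M.filter (fun e => G.fst e = v)).card + (M.filter (fun e => G.snd e = v)).card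

/-- An `f`-matching: every vertex `v` has degree at most `f v`. -/
def Multigraph.IsFMatching [DecidableEq V] [DecidableEq E] (G : Multigraph V E)
    (f : V → ℕ) (M : Finset E) : Prop :=
  ∀ v, G.deg M v ≤ f v

def MWalk.edgeSet [DecidableEq E] (W : MWalk V E) : Finset E :=
  (Finset.range W.len).image W.es

/-- Consecutive edges alternate between `M` and its complement. -/
def MWalk.Alternating [DecidableEq E] (W : MWalk V E) (M : Finset E) : Prop :=
  ∀ i, i + 1 < W.len → ((W.es i ∈ M) ↔ W.es (i+1) ∉ M)

/-- An augmenting trail: an alternating trail that starts and ends with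
unmatched edges at free (deficient) vertices; if closed, the total endpoint
deficiency is at least 2. -/
def IsAugTrail [DecidableEq V] [DecidableEq E] (G : Multigraph V E) (f : V → ℕ)
    (M : Finset E) (W : MWalk V E) : Prop :=
  W.IsTrail G ∧ 1 ≤ W.len ∧ W.len % 2 = 1 ∧ W.Alternating M ∧
  W.es 0 ∉ M ∧ W.es (W.len - 1) ∉ M ∧
  G.deg M (W.vs 0) < f (W.vs 0) ∧ G.deg M (W.vs W.len) < f (W.vs W.len) ∧
  (W.vs 0 = W.vs W.len → G.deg M (W.vs 0) + 2 ≤ f (W.vs 0))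

/-- A shortest augmenting trail (sat). -/
def IsSAT [DecidableEq V] [DecidableEq E] (G : Multigraph V E) (f : V → ℕ)
    (M : Finset E) (W : MWalk V E) : Prop :=
  IsAugTrail G f M W ∧ ∀ W' : MWalk V E, IsAugTrail G f M W' → W.len ≤ W'.len

/-!
Augment repeatedly along augmenting trails inside the symmetric difference with `Mstar`. Such
a trail exists as long as the current `f`-matching `N` is smaller than `Mstar`; while
`N ∆ Mstar ⊆ M ∆ Mstar` and `N` dominates `M` in degree, it is augmenting for `M` as well, hence
has at least `s` edges. The `|Mstar| - |M|` trails are edge-disjoint inside `M ∆ Mstar`, so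
`(|Mstar| - |M|) s ≤ |M ∆ Mstar| = 2 |M \ Mstar| + (|Mstar| - |M|)`, which gives
`(|Mstar| - |M|) (s - 1) ≤ 2 |M| ≤ f(V)`.
-/

open Finset
open scoped symmDiff

namespace Multigraph

variable [DecidableEq V]

def incidence (G : Multigraph V E) (e : E) (v : V) : ℕ :=
  (if G.fst e = v then 1 else 0) + (if G.snd e = v then 1 else 0)

def otherEnd (G : Multigraph V E) (e : E) (v : V) : V :=
  if G.fst e = v then G.snd e else G.fst e

variable {G : Multigraph V E}

lemma incidence_of_links {e : E} {u w : V} (h : G.links e u w) (v : V) :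
    G.incidence e v = (if u = v then 1 else 0) + (if w = v then 1 else 0) := by
  rcases h with ⟨rfl, rfl⟩ | ⟨rfl, rfl⟩
  · rfl
  · exact add_comm _ _

lemma incidence_left_ne_zero {e : E} {u w : V} (h : G.links e u w) : G.incidence e u ≠ 0 := by
  simp [incidence_of_links h]

lemma incidence_right_ne_zero {e : E} {u w : V} (h : G.links e u w) : G.incidence e w ≠ 0 := by
  simp [incidence_of_links h]

lemma links_otherEnd {e : E} {v : V} (h : G.incidence e v ≠ 0) :
    G.links e v (G.otherEnd e v) := by
  unfold incidence at h
  unfold otherEnd links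
  split_ifs at h ⊢ <;> simp_all

variable [DecidableEq E] (G)

lemma deg_eq_sum_incidence (M : Finset E) (v : V) :
    G.deg M v = ∑ e ∈ M, G.incidence e v := by
  simp only [deg, incidence, sum_add_distrib, card_filter]

lemma deg_union_of_disjoint {A B : Finset E} (h : Disjoint A B) (v : V) :
    G.deg (A ∪ B) v = G.deg A v + G.deg B v := by
  simp only [deg_eq_sum_incidence, sum_union h]

lemma deg_inter_add_deg_sdiff (A B : Finset E) (v : V) :
    G.deg (A ∩ B) v + G.deg (A \ B) v = G.deg A v := by
  simp only [deg_eq_sum_incidence]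
  exact sum_inter_add_sum_sdiff A B _

lemma deg_symmDiff_add_deg_inter (A B : Finset E) (v : V) :
    G.deg (A ∆ B) v + G.deg (A ∩ B) v = G.deg A v + G.deg (B \ A) v := by
  rw [Finset.symmDiff_def, G.deg_union_of_disjoint disjoint_sdiff_sdiff,
    ← G.deg_inter_add_deg_sdiff A B]
  ring

lemma deg_le_deg_of_incident {A B : Finset E} {v : V}
    (h : ∀ e ∈ A, G.incidence e v ≠ 0 → e ∈ B) : G.deg A v ≤ G.deg B v := by
  simp only [deg_eq_sum_incidence]
  exact sum_le_sum_of_ne_zero h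

lemma deg_mono {A B : Finset E} (h : A ⊆ B) (v : V) : G.deg A v ≤ G.deg B v :=
  G.deg_le_deg_of_incident fun _ he _ => h he

lemma sum_deg [Fintype V] (M : Finset E) : ∑ v, G.deg M v = 2 * #M := by
  simp only [deg_eq_sum_incidence, incidence]
  rw [sum_comm]
  simp [sum_add_distrib, mul_comm]

lemma IsFMatching.two_mul_card_le [Fintype V] {G : Multigraph V E} {f : V → ℕ} {M : Finset E}
    (hM : G.IsFMatching f M) : 2 * #M ≤ ∑ v, f v :=
  G.sum_deg M ▸ sum_le_sum fun v _ => hM v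

end Multigraph

namespace MWalk

def concat (W : MWalk V E) (e : E) (w : V) : MWalk V E :=
  ⟨W.len + 1, Function.update W.vs (W.len + 1) w, Function.update W.es W.len e⟩

lemma concat_vs_zero (W : MWalk V E) (e : E) (w : V) : (W.concat e w).vs 0 = W.vs 0 := by
  simp [concat]

variable [DecidableEq E] {G : Multigraph V E} {W : MWalk V E} {M N Nstar : Finset E}

lemma IsTrail.sum_edgeSet {β : Type*} [AddCommMonoid β] (hW : W.IsTrail G) (g : E → β) :
    ∑ e ∈ W.edgeSet, g e = ∑ i ∈ range W.len, g (W.es i) :=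
  sum_image fun i hi j hj h => hW.2 i (mem_range.1 hi) j (mem_range.1 hj) h

lemma IsTrail.card_edgeSet (hW : W.IsTrail G) : #W.edgeSet = W.len := by
  simpa using hW.sum_edgeSet (fun _ => (1 : ℕ))

lemma mem_edgeSet {e : E} : e ∈ W.edgeSet ↔ ∃ i < W.len, W.es i = e := by
  simp [edgeSet]

lemma Alternating.mem_iff (h : W.Alternating N) (h0 : W.es 0 ∉ N) :
    ∀ i < W.len, (W.es i ∈ N ↔ i % 2 = 1)
  | 0, _ => iff_of_false h0 (by norm_num)
  | i + 1, hi => by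
    have hstep := h i hi
    have ih := h.mem_iff h0 i (by omega)
    have hpar : (i + 1) % 2 = 1 ↔ ¬ i % 2 = 1 := by omega
    tauto

lemma IsTrail.concat {e : E} {w : V} (hW : W.IsTrail G) (he : e ∉ W.edgeSet)
    (hl : G.links e (W.vs W.len) w) :
    (W.concat e w).IsTrail G := by
  have hes : ∀ i < W.len, (W.concat e w).es i = W.es i := fun i hi =>
    Function.update_of_ne hi.ne _ _
  have hvs : ∀ i ≤ W.len, (W.concat e w).vs i = W.vs i := fun i hi =>
    Function.update_of_ne (by omega) _ _
  have hlast : (W.concat e w).es W.len = e := Function.update_self _ _ _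
  refine ⟨fun i hi => ?_, fun i hi j hj hij => ?_⟩
  · rcases Nat.lt_succ_iff_lt_or_eq.1 hi with hi | rfl
    · rw [hes i hi, hvs i hi.le, hvs (i + 1) hi]
      exact hW.1 i hi
    · rw [hlast, hvs _ le_rfl, show (W.concat e w).vs (W.len + 1) = w from
        Function.update_self _ _ _]
      exact hl
  · rcases Nat.lt_succ_iff_lt_or_eq.1 hi with hi | rfl <;>
      rcases Nat.lt_succ_iff_lt_or_eq.1 hj with hj | rfl
    · rw [hes i hi, hes j hj] at hij
      exact hW.2 i hi j hj hij
    · rw [hes i hi, hlast] at hij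
      exact absurd (mem_edgeSet.2 ⟨i, hi, hij⟩) he
    · rw [hes j hj, hlast] at hij
      exact absurd (mem_edgeSet.2 ⟨j, hj, hij.symm⟩) he
    · rfl

def Alternates (W : MWalk V E) (N Nstar : Finset E) : Prop :=
  ∀ i < W.len, W.es i ∈ if i % 2 = 0 then Nstar \ N else N \ Nstar

lemma Alternates.mem_iff (hA : W.Alternates N Nstar) :
    ∀ i < W.len, (W.es i ∈ N ↔ i % 2 = 1) := by
  intro i hi
  have h := hA i hi
  split_ifs at h with hpar <;> simp only [mem_sdiff] at h <;>
    simp only [h, true_iff, false_iff] <;> omega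

lemma Alternates.edgeSet_subset (hA : W.Alternates N Nstar) : W.edgeSet ⊆ N ∆ Nstar := by
  intro e he
  obtain ⟨i, hi, rfl⟩ := mem_edgeSet.1 he
  have h := hA i hi
  rw [mem_symmDiff]
  split_ifs at h <;> simp only [mem_sdiff] at h <;> tauto

lemma Alternates.of_symmDiff_subset (hA : W.Alternates N Nstar) (h : N ∆ Nstar ⊆ M ∆ Nstar) :
    W.Alternates M Nstar := by
  intro i hi
  have hM := h (hA.edgeSet_subset (mem_edgeSet.2 ⟨i, hi, rfl⟩))
  have hN := hA i hi
  rw [mem_symmDiff] at hM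
  split_ifs at hN ⊢ <;> simp only [mem_sdiff] at hN ⊢ <;> tauto

lemma Alternates.symmDiff_edgeSet_symmDiff (hA : W.Alternates N Nstar) :
    (N ∆ W.edgeSet) ∆ Nstar = (N ∆ Nstar) \ W.edgeSet := by
  rw [symmDiff_right_comm, symmDiff_of_ge hA.edgeSet_subset]

lemma Alternates.concat {e : E} {w : V} (hA : W.Alternates N Nstar)
    (he : e ∈ if W.len % 2 = 0 then Nstar \ N else N \ Nstar) :
    (W.concat e w).Alternates N Nstar := by
  intro i hi
  rcases Nat.lt_succ_iff_lt_or_eq.1 hi with hi | rfl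
  · rw [show (W.concat e w).es i = W.es i from Function.update_of_ne hi.ne _ _]
    exact hA i hi
  · rwa [show (W.concat e w).es W.len = e from Function.update_self _ _ _]

variable [DecidableEq V]

/-- The alternating sum of the degrees at `v` of the edges of a trail telescopes to its
endpoints. -/
lemma IsTrail.deg_sdiff_sub_deg_inter (hW : W.IsTrail G)
    (hN : ∀ i < W.len, (W.es i ∈ N ↔ i % 2 = 1)) (v : V) :
    (G.deg (W.edgeSet \ N) v : ℤ) - G.deg (W.edgeSet ∩ N) v =
      (if W.vs 0 = v then 1 else 0) - (-1) ^ W.len * (if W.vs W.len = v then 1 else 0) := by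
  set a : ℕ → ℤ := fun i => (-1) ^ i * if W.vs i = v then 1 else 0
  have hstep : ∀ i ∈ range W.len,
      (if W.es i ∈ N then -(G.incidence (W.es i) v : ℤ) else G.incidence (W.es i) v) =
        a i - a (i + 1) := by
    intro i hi
    have hi := mem_range.1 hi
    rw [Multigraph.incidence_of_links (hW.1 i hi)]
    rcases Nat.even_or_odd i with h | h
    · simp [a, hN i hi, Nat.even_iff.1 h, h.neg_one_pow, h.add_one.neg_one_pow]
      split_ifs <;> norm_num
    · simp [a, hN i hi, Nat.odd_iff.1 h, h.neg_one_pow, h.add_one.neg_one_pow]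
      split_ifs <;> norm_num
  calc (G.deg (W.edgeSet \ N) v : ℤ) - G.deg (W.edgeSet ∩ N) v
      = ∑ e ∈ W.edgeSet, (if e ∈ N then -(G.incidence e v : ℤ) else G.incidence e v) := by
        rw [sum_ite, ← filter_mem_eq_inter, ← filter_notMem_eq_sdiff]
        simp only [Multigraph.deg_eq_sum_incidence, sum_neg_distrib, Nat.cast_sum]
        ring
    _ = ∑ i ∈ range W.len,
          (if W.es i ∈ N then -(G.incidence (W.es i) v : ℤ) else G.incidence (W.es i) v) :=
        hW.sum_edgeSet _
    _ = a 0 - a W.len := by rw [sum_congr rfl hstep, sum_range_sub']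
    _ = _ := by simp [a]

lemma IsTrail.deg_symmDiff_edgeSet (hW : W.IsTrail G)
    (hN : ∀ i < W.len, (W.es i ∈ N ↔ i % 2 = 1)) (v : V) :
    (G.deg (N ∆ W.edgeSet) v : ℤ) =
      G.deg N v + (if W.vs 0 = v then 1 else 0) -
        (-1) ^ W.len * (if W.vs W.len = v then 1 else 0) := by
  have h1 : (G.deg (N ∆ W.edgeSet) v : ℤ) + G.deg (W.edgeSet ∩ N) v =
      G.deg N v + G.deg (W.edgeSet \ N) v := by
    exact_mod_cast inter_comm N W.edgeSet ▸ G.deg_symmDiff_add_deg_inter N W.edgeSet v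
  linarith [hW.deg_sdiff_sub_deg_inter hN v]

lemma IsTrail.two_mul_card_symmDiff_edgeSet [Fintype V] (hW : W.IsTrail G)
    (hN : ∀ i < W.len, (W.es i ∈ N ↔ i % 2 = 1)) :
    (2 * #(N ∆ W.edgeSet) : ℤ) = 2 * #N + 1 - (-1) ^ W.len := by
  calc (2 * #(N ∆ W.edgeSet) : ℤ) = ∑ v, (G.deg (N ∆ W.edgeSet) v : ℤ) := by
        exact_mod_cast (G.sum_deg _).symm
    _ = ∑ v, ((G.deg N v : ℤ) + (if W.vs 0 = v then 1 else 0) -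
          (-1) ^ W.len * (if W.vs W.len = v then 1 else 0)) :=
        sum_congr rfl fun v _ => hW.deg_symmDiff_edgeSet hN v
    _ = 2 * #N + 1 - (-1) ^ W.len := by
        simp only [sum_sub_distrib, sum_add_distrib, ← mul_sum, sum_ite_eq, mem_univ, if_true]
        rw [← Nat.cast_sum, G.sum_deg N]
        push_cast
        ring

lemma IsTrail.deg_symmDiff_of_even (hW : W.IsTrail G)
    (hpar : ∀ i < W.len, (W.es i ∈ N ↔ i % 2 = 1)) (heven : W.len % 2 = 0) (v : V) :
    G.deg (N ∆ W.edgeSet) v + (if W.vs W.len = v then 1 else 0) =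
      G.deg N v + (if W.vs 0 = v then 1 else 0) := by
  have h := hW.deg_symmDiff_edgeSet hpar v
  rw [(Nat.even_iff.2 heven).neg_one_pow] at h
  zify
  linarith

lemma IsTrail.card_symmDiff_of_even [Fintype V] (hW : W.IsTrail G)
    (hpar : ∀ i < W.len, (W.es i ∈ N ↔ i % 2 = 1)) (heven : W.len % 2 = 0) :
    #(N ∆ W.edgeSet) = #N := by
  have h := hW.two_mul_card_symmDiff_edgeSet (G := G) hpar
  rw [(Nat.even_iff.2 heven).neg_one_pow] at h
  omega

lemma Alternates.isAugTrail {f : V → ℕ} (hA : W.Alternates N Nstar)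
    (hW : W.IsTrail G) (hodd : W.len % 2 = 1) (h0 : G.deg N (W.vs 0) < f (W.vs 0))
    (hL : G.deg N (W.vs W.len) < f (W.vs W.len))
    (hcl : W.vs 0 = W.vs W.len → G.deg N (W.vs 0) + 2 ≤ f (W.vs 0)) :
    IsAugTrail G f N W := by
  have hpar := hA.mem_iff
  refine ⟨hW, by omega, hodd, fun i hi => ?_, ?_, ?_, h0, hL, hcl⟩
  · rw [hpar i (by omega), hpar (i + 1) hi]
    omega
  · rw [hpar 0 (by omega)]
    omega
  · rw [hpar _ (by omega)]
    omega

end MWalk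

namespace IsAugTrail

variable [DecidableEq V] [DecidableEq E] {G : Multigraph V E} {f : V → ℕ} {N : Finset E}
  {W : MWalk V E}

lemma mem_iff (hT : IsAugTrail G f N W) : ∀ i < W.len, (W.es i ∈ N ↔ i % 2 = 1) :=
  hT.2.2.2.1.mem_iff hT.2.2.2.2.1

lemma deg_symmDiff (hT : IsAugTrail G f N W) (v : V) :
    G.deg (N ∆ W.edgeSet) v =
      G.deg N v + (if W.vs 0 = v then 1 else 0) + (if W.vs W.len = v then 1 else 0) := by
  have h := hT.1.deg_symmDiff_edgeSet hT.mem_iff v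
  rw [(Nat.odd_iff.2 hT.2.2.1).neg_one_pow] at h
  zify
  push_cast [h]
  ring

lemma deg_le_deg_symmDiff (hT : IsAugTrail G f N W) (v : V) :
    G.deg N v ≤ G.deg (N ∆ W.edgeSet) v := by
  rw [hT.deg_symmDiff]
  omega

lemma isFMatching_symmDiff (hT : IsAugTrail G f N W) (hN : G.IsFMatching f N) :
    G.IsFMatching f (N ∆ W.edgeSet) := by
  intro v
  rw [hT.deg_symmDiff]
  obtain ⟨-, -, -, -, -, -, h0, hL, hcl⟩ := hT
  split_ifs with ha hb hb
  · subst ha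
    have := hcl hb.symm
    omega
  · subst ha
    omega
  · subst hb
    omega
  · simpa using hN v

lemma card_symmDiff [Fintype V] (hT : IsAugTrail G f N W) : #(N ∆ W.edgeSet) = #N + 1 := by
  have h := hT.1.two_mul_card_symmDiff_edgeSet hT.mem_iff
  rw [(Nat.odd_iff.2 hT.2.2.1).neg_one_pow] at h
  omega

lemma of_alternates {M Mstar : Finset E} (hT : IsAugTrail G f N W) (hA : W.Alternates M Mstar)
    (h0 : G.deg M (W.vs 0) ≤ G.deg N (W.vs 0))
    (hL : G.deg M (W.vs W.len) ≤ G.deg N (W.vs W.len)) : IsAugTrail G f M W := by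
  obtain ⟨hW, -, hodd, -, -, -, h0', hL', hcl⟩ := hT
  exact hA.isAugTrail hW hodd (by omega) (by omega) fun h => by have := hcl h; omega

end IsAugTrail

section Augmenting

variable [DecidableEq V] [DecidableEq E] {G : Multigraph V E} {f : V → ℕ} {M Mstar : Finset E}

lemma exists_maximal_alternating_trail {v₀ : V} {e₀ : E} (he₀ : e₀ ∈ Mstar \ M)
    (hv₀ : G.incidence e₀ v₀ ≠ 0) :
    ∃ W : MWalk V E, W.IsTrail G ∧ 1 ≤ W.len ∧ W.vs 0 = v₀ ∧ W.Alternates M Mstar ∧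
      ∀ e ∈ (if W.len % 2 = 0 then Mstar \ M else M \ Mstar),
        G.incidence e (W.vs W.len) ≠ 0 → e ∈ W.edgeSet := by
  classical
  let P : ℕ → Prop := fun n => ∃ W : MWalk V E,
    W.IsTrail G ∧ W.vs 0 = v₀ ∧ W.Alternates M Mstar ∧ W.len = n
  have hbound : ∀ n, P n → n ≤ #(M ∆ Mstar) := by
    rintro _ ⟨W, hW, -, hA, rfl⟩
    exact hW.card_edgeSet ▸ card_le_card hA.edgeSet_subset
  have hP0 : P 0 := ⟨⟨0, fun _ => v₀, fun _ => e₀⟩, ⟨nofun, nofun⟩, rfl, nofun, rfl⟩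
  obtain ⟨W, hW, hW0, hA, hlen⟩ := Nat.findGreatest_spec (hbound 0 hP0) hP0
  have hstuck : ∀ e ∈ (if W.len % 2 = 0 then Mstar \ M else M \ Mstar),
      G.incidence e (W.vs W.len) ≠ 0 → e ∈ W.edgeSet := by
    intro e he hinc
    by_contra hnew
    have hext : P (W.len + 1) :=
      ⟨W.concat e (G.otherEnd e (W.vs W.len)), hW.concat hnew (Multigraph.links_otherEnd hinc),
        (W.concat_vs_zero _ _).trans hW0, hA.concat he, rfl⟩
    have := Nat.le_findGreatest (hbound _ hext) hext
    omega
  refine ⟨W, hW, Nat.one_le_iff_ne_zero.2 fun hlen0 => ?_, hW0, hA, hstuck⟩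
  have := hstuck e₀ (by simpa [hlen0] using he₀) (by rwa [hlen0, hW0])
  simp [MWalk.edgeSet, hlen0] at this

/-- At the end `u` of the trail, the trail has one more `Mstar`-edge than `M`-edge (two more if
it is closed), and it contains every edge of `M \ Mstar` at `u`. -/
lemma deg_add_le_of_forall_mem_edgeSet {W : MWalk V E} (hMstar : G.IsFMatching f Mstar)
    (hW : W.IsTrail G) (hA : W.Alternates M Mstar) (hodd : W.len % 2 = 1)
    (hstuck : ∀ e ∈ M \ Mstar, G.incidence e (W.vs W.len) ≠ 0 → e ∈ W.edgeSet) :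
    G.deg M (W.vs W.len) + 1 + (if W.vs 0 = W.vs W.len then 1 else 0) ≤ f (W.vs W.len) := by
  set u := W.vs W.len
  have hsigned := hW.deg_sdiff_sub_deg_inter hA.mem_iff u
  rw [(Nat.odd_iff.2 hodd).neg_one_pow, if_pos rfl] at hsigned
  have hin : G.deg (M \ Mstar) u ≤ G.deg (W.edgeSet ∩ M) u :=
    G.deg_le_deg_of_incident fun e he hinc => mem_inter.2 ⟨hstuck e he hinc, (mem_sdiff.1 he).1⟩
  have hout : G.deg (W.edgeSet \ M) u ≤ G.deg (Mstar \ M) u := by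
    refine G.deg_mono (fun e he => ?_) u
    have h := hA.edgeSet_subset (mem_sdiff.1 he).1
    simp only [mem_sdiff, mem_symmDiff] at he h ⊢
    tauto
  have hM := G.deg_inter_add_deg_sdiff M Mstar u
  have hMs := G.deg_inter_add_deg_sdiff Mstar M u
  rw [inter_comm] at hMs
  have := hMstar u
  split_ifs at hsigned ⊢ <;> omega

lemma isFMatching_symmDiff_of_even {W : MWalk V E} (hM : G.IsFMatching f M) (hW : W.IsTrail G)
    (hpar : ∀ i < W.len, (W.es i ∈ M ↔ i % 2 = 1)) (heven : W.len % 2 = 0)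
    (h0 : G.deg M (W.vs 0) < f (W.vs 0)) : G.IsFMatching f (M ∆ W.edgeSet) := by
  intro v
  have h := hW.deg_symmDiff_of_even hpar heven v
  have := hM v
  rcases eq_or_ne (W.vs 0) v with rfl | ha
  · split_ifs at h <;> omega
  · rw [if_neg ha] at h
    split_ifs at h <;> omega

/-- An augmenting trail of the flipped matching lies outside the flipped trail `W`, so it cannot
end where `W` got stuck; everywhere else flipping an even trail does not lower degrees. -/
lemma isAugTrail_of_symmDiff_of_even {W W' : MWalk V E} (hW : W.IsTrail G)
    (hA : W.Alternates M Mstar) (heven : W.len % 2 = 0)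
    (hstuck : ∀ e ∈ Mstar \ M, G.incidence e (W.vs W.len) ≠ 0 → e ∈ W.edgeSet)
    (hT' : IsAugTrail G f (M ∆ W.edgeSet) W') (hA' : W'.Alternates (M ∆ W.edgeSet) Mstar) :
    IsAugTrail G f M W' ∧ W'.Alternates M Mstar := by
  have hsd := hA.symmDiff_edgeSet_symmDiff
  have hAM : W'.Alternates M Mstar := hA'.of_symmDiff_subset (hsd ▸ sdiff_subset)
  have havoid : ∀ j < W'.len, j % 2 = 0 → G.incidence (W'.es j) (W.vs W.len) = 0 := by
    intro j hj hpar
    by_contra hinc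
    have hmem := hstuck _ (by simpa [hpar] using hAM j hj) hinc
    have hsub := hA'.edgeSet_subset (MWalk.mem_edgeSet.2 ⟨j, hj, rfl⟩)
    rw [hsd] at hsub
    exact (mem_sdiff.1 hsub).2 hmem
  have hle : ∀ v ≠ W.vs W.len, G.deg M v ≤ G.deg (M ∆ W.edgeSet) v := by
    intro v hv
    have := hW.deg_symmDiff_of_even hA.mem_iff heven v
    rw [if_neg hv.symm] at this
    split_ifs at this <;> omega
  have hodd' := hT'.2.2.1
  refine ⟨hT'.of_alternates hAM (hle _ fun h => ?_) (hle _ fun h => ?_), hAM⟩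
  · exact Multigraph.incidence_left_ne_zero (hT'.1.1 0 (by omega))
      (h ▸ havoid 0 (by omega) rfl)
  · have hl := hT'.1.1 (W'.len - 1) (by omega)
    rw [Nat.sub_add_cancel (by omega)] at hl
    exact Multigraph.incidence_right_ne_zero hl (h ▸ havoid _ (by omega) (by omega))

/-- Grow a maximal alternating trail from a vertex where `M` has smaller degree than `Mstar`. If
it has odd length it is augmenting; otherwise flip it and recurse on the smaller symmetric
difference. -/
theorem exists_isAugTrail_alternates [Fintype V] (hMstar : G.IsFMatching f Mstar)
    (hM : G.IsFMatching f M) (hlt : #M < #Mstar) :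
    ∃ W : MWalk V E, IsAugTrail G f M W ∧ W.Alternates M Mstar := by
  induction hk : #(M ∆ Mstar) using Nat.strong_induction_on generalizing M with
  | _ k ih =>
  obtain ⟨v₀, -, hv₀⟩ : ∃ v ∈ univ, G.deg M v < G.deg Mstar v :=
    exists_lt_of_sum_lt (by rw [G.sum_deg, G.sum_deg]; omega)
  obtain ⟨e₀, he₀, hinc⟩ : ∃ e ∈ Mstar \ M, G.incidence e v₀ ≠ 0 := by
    by_contra! h
    have h1 : G.deg (Mstar \ M) v₀ = 0 := by
      rw [G.deg_eq_sum_incidence]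
      exact sum_eq_zero h
    have h2 := G.deg_inter_add_deg_sdiff M Mstar v₀
    have h3 := G.deg_inter_add_deg_sdiff Mstar M v₀
    rw [inter_comm] at h3
    omega
  obtain ⟨W, hW, hlen, hW0, hA, hstuck⟩ := exists_maximal_alternating_trail he₀ hinc
  have h0 : G.deg M (W.vs 0) < f (W.vs 0) := hW0 ▸ hv₀.trans_le (hMstar v₀)
  rcases Nat.mod_two_eq_zero_or_one W.len with heven | hodd
  · rw [if_pos heven] at hstuck
    have hsd : (M ∆ W.edgeSet) ∆ Mstar = (M ∆ Mstar) \ W.edgeSet :=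
      hA.symmDiff_edgeSet_symmDiff
    have hsmaller : #((M ∆ W.edgeSet) ∆ Mstar) < k := by
      have := hW.card_edgeSet ▸ card_le_card hA.edgeSet_subset
      rw [hsd, card_sdiff_of_subset hA.edgeSet_subset, hW.card_edgeSet]
      omega
    obtain ⟨W', hT', hA'⟩ := ih _ hsmaller
      (isFMatching_symmDiff_of_even hM hW hA.mem_iff heven h0)
      (by rwa [hW.card_symmDiff_of_even hA.mem_iff heven]) rfl
    exact ⟨W', isAugTrail_of_symmDiff_of_even hW hA heven hstuck hT' hA'⟩
  · rw [if_neg (by omega)] at hstuck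
    have hend := deg_add_le_of_forall_mem_edgeSet hMstar hW hA hodd hstuck
    refine ⟨W, hA.isAugTrail hW hodd h0 (by omega) fun h => ?_, hA⟩
    rw [if_pos h] at hend
    rw [h]
    omega

theorem card_sub_mul_le_card_symmDiff {s : ℕ} [Fintype V] (hMstar : G.IsFMatching f Mstar)
    (hlong : ∀ W : MWalk V E, IsAugTrail G f M W → s ≤ W.len) {N : Finset E}
    (hN : G.IsFMatching f N) (hNM : N ∆ Mstar ⊆ M ∆ Mstar)
    (hdeg : ∀ v, G.deg M v ≤ G.deg N v) :
    (#Mstar - #N) * s ≤ #(N ∆ Mstar) := by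
  induction hk : #Mstar - #N generalizing N with
  | zero => simp
  | succ k ih =>
    obtain ⟨T, hT, hA⟩ := exists_isAugTrail_alternates hMstar hN (by omega)
    have hsd := hA.symmDiff_edgeSet_symmDiff
    have hs : s ≤ T.len :=
      hlong T (hT.of_alternates (hA.of_symmDiff_subset hNM) (hdeg _) (hdeg _))
    have hlen : T.len ≤ #(N ∆ Mstar) := hT.1.card_edgeSet ▸ card_le_card hA.edgeSet_subset
    have hrest := ih (hT.isFMatching_symmDiff hN) (hsd ▸ sdiff_subset.trans hNM)
      (fun v => (hdeg v).trans (hT.deg_le_deg_symmDiff v)) (by rw [hT.card_symmDiff]; omega)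
    rw [hsd, card_sdiff_of_subset hA.edgeSet_subset, hT.1.card_edgeSet] at hrest
    rw [Nat.succ_mul]
    omega

theorem card_sub_card_mul_le_sum {s : ℕ} [Fintype V] (hM : G.IsFMatching f M)
    (hMstar : G.IsFMatching f Mstar)
    (hlong : ∀ W : MWalk V E, IsAugTrail G f M W → s ≤ W.len) :
    (#Mstar - #M) * (s - 1) ≤ ∑ v, f v := by
  have h := card_sub_mul_le_card_symmDiff hMstar hlong hM subset_rfl fun _ => le_rfl
  have hsd : #(M ∆ Mstar) = #(M \ Mstar) + #(Mstar \ M) :=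
    card_union_of_disjoint disjoint_sdiff_sdiff
  have h1 := card_sdiff_add_card_inter M Mstar
  have h2 := card_sdiff_add_card_inter Mstar M
  rw [inter_comm] at h2
  have h3 := hM.two_mul_card_le
  rw [Nat.mul_sub_one]
  omega

end Augmenting

/-- If every augmenting trail for M has length at least s, then for any
f-matching M*, |M*| − |M| ≤ 2·f(V)/(s−1) (i.e. at most f(V)/(s−1) augmenting
trails are needed), and if s ≥ √f(V) + 1 then |M*| − |M| ≤ 2√f(V). -/
theorem stmt_2 [Fintype V] [DecidableEq V] [DecidableEq E]
    (G : Multigraph V E) (f : V → ℕ) (M Mstar : Finset E) (s : ℕ) (hs : 2 ≤ s)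
    (hM : G.IsFMatching f M) (hMstar : G.IsFMatching f Mstar)
    (hlong : ∀ W : MWalk V E, IsAugTrail G f M W → s ≤ W.len) :
    ((Mstar.card : ℝ) - M.card ≤ 2 * (∑ v : V, (f v : ℝ)) / ((s : ℝ) - 1)) ∧
    (Real.sqrt (∑ v : V, (f v : ℝ)) + 1 ≤ (s : ℝ) →
      (Mstar.card : ℝ) - M.card ≤ 2 * Real.sqrt (∑ v : V, (f v : ℝ))) := by
  have hkey : ((#Mstar - #M : ℕ) : ℝ) * ((s : ℝ) - 1) ≤ ∑ v : V, (f v : ℝ) := by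
    have := card_sub_card_mul_le_sum hM hMstar hlong
    simpa [Nat.cast_sub (by omega : 1 ≤ s)] using (Nat.cast_le (α := ℝ)).2 this
  have hdk : (#Mstar : ℝ) - #M ≤ ((#Mstar - #M : ℕ) : ℝ) := by
    have : (#Mstar : ℝ) ≤ ((#Mstar - #M : ℕ) : ℝ) + #M := by
      exact_mod_cast (by omega : #Mstar ≤ #Mstar - #M + #M)
    linarith
  set F : ℝ := ∑ v : V, (f v : ℝ)
  set k : ℝ := ((#Mstar - #M : ℕ) : ℝ)
  have hs1 : (1 : ℝ) ≤ s - 1 := by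
    have : (2 : ℝ) ≤ s := by exact_mod_cast hs
    linarith
  have hF : 0 ≤ F := by positivity
  have hk : 0 ≤ k := by positivity
  refine ⟨?_, fun hsqrt => ?_⟩
  · rw [le_div_iff₀ (by linarith)]
    nlinarith
  · have hsq := Real.sq_sqrt hF
    have hr := Real.sqrt_nonneg F
    nlinarith
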